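/- arXiv:2401.08230 — 4 statements merged into one kernel-verified Lean document; each statement's English description precedes it below -/
import Mathlib

section
/- For every integer N ≥ 1, the sum over j from 1 to N-1 of cot²(πj/N) equals (N-1)(N-2)/3. -/
/-!
With `ζ = exp (2πi/N)` one has `cot (πj/N) = i (1 + 2/(ζ^j - 1))`, and for `ζ^j ≠ 1`
the arithmetico-geometric sum `A_j = ∑_{k<N} k ζ^{jk}` satisfies `(ζ^j - 1) A_j = N`.
Hence `cot² (πj/N) = -(1 + 2 A_j/N)²`. Summed over all `j < N`, orthogonality
`∑_j ζ^{jm} = N·[N ∣ m]` gives `∑_j A_j = 0` and `∑_j A_j² = N ∑_{k<N} k (N - k)`;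
subtracting the `j = 0` term `A_0 = N (N - 1)/2` leaves `(N - 1)(N - 2)/3`.
-/

open Real Finset

section ArithGeomSum

variable {R : Type*} [CommRing R]

def arithGeomSum (x : R) (n : ℕ) : R := ∑ k ∈ range n, (k : R) * x ^ k

theorem sub_one_mul_arithGeomSum (x : R) (n : ℕ) :
    (x - 1) * arithGeomSum x n = n * x ^ n - x * ∑ k ∈ range n, x ^ k := by
  induction n with
  | zero => simp [arithGeomSum]
  | succ n ih =>
    rw [arithGeomSum, sum_range_succ, sum_range_succ] at *
    push_cast
    linear_combination ih

theorem two_mul_arithGeomSum_one (n : ℕ) : 2 * arithGeomSum (1 : R) n = n * (n - 1) := by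
  induction n with
  | zero => simp [arithGeomSum]
  | succ n ih =>
    rw [arithGeomSum, sum_range_succ] at *
    push_cast
    linear_combination ih

theorem sum_range_mul_sub (m : R) (n : ℕ) :
    6 * ∑ k ∈ range n, (k : R) * (m - k) = 3 * m * n * (n - 1) - (n - 1) * n * (2 * n - 1) := by
  induction n with
  | zero => simp
  | succ n ih =>
    rw [sum_range_succ]
    push_cast
    linear_combination ih

variable [IsDomain R]

theorem geom_sum_eq_zero_of_pow_eq_one {x : R} {n : ℕ} (hx : x ^ n = 1) (hx1 : x ≠ 1) :
    ∑ k ∈ range n, x ^ k = 0 := by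
  have : (∑ k ∈ range n, x ^ k) * (x - 1) = 0 := by rw [geom_sum_mul, hx, sub_self]
  exact (mul_eq_zero.mp this).resolve_right (sub_ne_zero.mpr hx1)

theorem sub_one_mul_arithGeomSum_of_pow_eq_one {x : R} {n : ℕ} (hx : x ^ n = 1) (hx1 : x ≠ 1) :
    (x - 1) * arithGeomSum x n = n := by
  rw [sub_one_mul_arithGeomSum, geom_sum_eq_zero_of_pow_eq_one hx hx1, hx]
  ring

end ArithGeomSum

theorem sum_range_ite_dvd_add_mul {R : Type*} [CommRing R] {N k : ℕ} (hk : k < N) :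
    ∑ l ∈ range N, (if N ∣ k + l then (k : R) * l else 0) = k * (N - k) := by
  rcases Nat.eq_zero_or_pos k with rfl | hk0
  · simp
  have hdvd : ∀ l ∈ range N, N ∣ k + l ↔ l = N - k := by
    intro l hl
    rw [mem_range] at hl
    constructor
    · rintro ⟨c, hc⟩
      have : c < 2 := by nlinarith
      interval_cases c <;> omega
    · rintro rfl
      exact ⟨1, by omega⟩
  rw [sum_congr rfl fun l hl => if_congr (hdvd l hl) rfl rfl, sum_ite_eq',
    if_pos (by simp; omega), Nat.cast_sub hk.le]

namespace IsPrimitiveRoot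

variable {R : Type*} [CommRing R] [IsDomain R] {ζ : R} {N : ℕ}

theorem sum_pow_pow_eq_ite (hζ : IsPrimitiveRoot ζ N) (m : ℕ) :
    ∑ j ∈ range N, (ζ ^ j) ^ m = if N ∣ m then (N : R) else 0 := by
  simp_rw [← pow_mul, mul_comm _ m, pow_mul]
  split_ifs with h
  · simp [(hζ.pow_eq_one_iff_dvd m).mpr h]
  · exact geom_sum_eq_zero_of_pow_eq_one (by rw [pow_right_comm, hζ.pow_eq_one, one_pow])
      ((hζ.pow_eq_one_iff_dvd m).not.mpr h)

theorem sum_arithGeomSum_pow (hζ : IsPrimitiveRoot ζ N) :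
    ∑ j ∈ range N, arithGeomSum (ζ ^ j) N = 0 := by
  simp only [arithGeomSum]
  rw [sum_comm]
  refine sum_eq_zero fun k hk => ?_
  rw [← mul_sum, hζ.sum_pow_pow_eq_ite]
  split_ifs with h
  · simp [Nat.eq_zero_of_dvd_of_lt h (mem_range.mp hk)]
  · simp

theorem sum_arithGeomSum_pow_sq_eq_mul_sum (hζ : IsPrimitiveRoot ζ N) :
    ∑ j ∈ range N, arithGeomSum (ζ ^ j) N ^ 2 = N * ∑ k ∈ range N, (k : R) * (N - k) := by
  have hsq : ∀ x : R, arithGeomSum x N ^ 2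
      = ∑ k ∈ range N, ∑ l ∈ range N, (k : R) * l * x ^ (k + l) := by
    intro x
    rw [sq, arithGeomSum, sum_mul_sum]
    refine sum_congr rfl fun k _ => sum_congr rfl fun l _ => ?_
    ring
  simp_rw [hsq]
  rw [sum_comm, mul_sum]
  refine sum_congr rfl fun k hk => ?_
  rw [sum_comm, ← sum_range_ite_dvd_add_mul (mem_range.mp hk), mul_sum]
  refine sum_congr rfl fun l _ => ?_
  rw [← mul_sum, hζ.sum_pow_pow_eq_ite]
  split_ifs <;> ring

theorem six_mul_sum_arithGeomSum_pow_sq (hζ : IsPrimitiveRoot ζ N) :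
    6 * ∑ j ∈ range N, arithGeomSum (ζ ^ j) N ^ 2 = N ^ 2 * (N ^ 2 - 1) := by
  rw [hζ.sum_arithGeomSum_pow_sq_eq_mul_sum]
  linear_combination (N : R) * sum_range_mul_sub (N : R) N

end IsPrimitiveRoot

open Complex in
theorem cot_pi_mul_div_eq_arithGeomSum {N j : ℕ} (hN : N ≠ 0) (hj : ¬ N ∣ j) :
    (Real.cot (π * j / N) : ℂ) =
      I * (1 + 2 * arithGeomSum (exp (2 * π * I / N) ^ j) N / N) := by
  have hζ := isPrimitiveRoot_exp N hN
  set x := exp (2 * π * I / N) ^ j with hx_def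
  set A := arithGeomSum x N
  have hx1 : x ≠ 1 := (hζ.pow_eq_one_iff_dvd j).not.mpr hj
  have hA : (x - 1) * A = N :=
    sub_one_mul_arithGeomSum_of_pow_eq_one (by rw [pow_right_comm, hζ.pow_eq_one, one_pow]) hx1
  have hx : exp (2 * π * I * (j / N)) = x := by rw [hx_def, ← Complex.exp_nat_mul]; ring_nf
  have hN' : (N : ℂ) ≠ 0 := Nat.cast_ne_zero.mpr hN
  have hx1' : (1 : ℂ) - x ≠ 0 := sub_ne_zero.mpr hx1.symm
  rw [ofReal_cot, show ((π * j / N : ℝ) : ℂ) = π * (j / N) by push_cast; ring,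
    cot_pi_eq_exp_ratio, hx]
  field_simp
  linear_combination (-2 : ℂ) * hA + ((x - 1) * (N + 2 * A)) * I_sq

theorem cot_sq_sum (N : ℕ) (hN : 1 ≤ N) :
    ∑ j ∈ Finset.Ico 1 N, Real.cot (Real.pi * j / N) ^ 2
      = ((N : ℝ) - 1) * ((N : ℝ) - 2) / 3 := by
  set ζ := Complex.exp (2 * π * Complex.I / N)
  have hζ : IsPrimitiveRoot ζ N := Complex.isPrimitiveRoot_exp N (by omega)
  set A : ℕ → ℂ := fun j => arithGeomSum (ζ ^ j) N
  have hterm : ∀ j ∈ Ico 1 N,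
      ((Real.cot (π * j / N) ^ 2 : ℝ) : ℂ) = -(1 + 2 * A j / N) ^ 2 := by
    intro j hj
    rw [mem_Ico] at hj
    rw [Complex.ofReal_pow, cot_pi_mul_div_eq_arithGeomSum (by omega)
      (Nat.not_dvd_of_pos_of_lt hj.1 hj.2), mul_pow, Complex.I_sq, neg_one_mul]
  have hA₀ : A 0 = N * (N - 1) / 2 := by
    have h : 2 * A 0 = N * (N - 1) := by simpa [A] using two_mul_arithGeomSum_one (R := ℂ) N
    linear_combination h / 2
  have hsum : ∑ j ∈ range N, A j = 0 := hζ.sum_arithGeomSum_pow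
  have hsq : 6 * ∑ j ∈ range N, A j ^ 2 = N ^ 2 * (N ^ 2 - 1) :=
    hζ.six_mul_sum_arithGeomSum_pow_sq
  have hN₀ : (N : ℂ) ≠ 0 := Nat.cast_ne_zero.mpr (by omega)
  apply Complex.ofReal_injective
  rw [Complex.ofReal_sum, sum_congr rfl hterm, sum_Ico_eq_sub _ hN, sum_range_one]
  simp only [add_sq, mul_pow, div_pow, sum_neg_distrib, sum_add_distrib, ← sum_div, ← mul_sum,
    sum_const, card_range, nsmul_eq_mul, hsum, hA₀]
  push_cast
  field_simp
  linear_combination (-2 : ℂ) * hsq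
end

section
/- Let x₁, ..., xₙ be distinct complex numbers and V the n×n Vandermonde matrix with entries V_{k,ℓ} = x_ℓ^{k-1}. Then V is invertible with inverse entries b_{k,ℓ} = (-1)^{n-ℓ} S_{n-ℓ}(x₁,...,x_{k-1},x_{k+1},...,xₙ) / Π_{m≠k}(x_k − x_m), where S_r denotes the elementary symmetric polynomial of degree r in n−1 variables. -/
open Finset Matrix Polynomial

theorem vandermonde_inverse (n : ℕ) (x : Fin n → ℂ) (hx : Function.Injective x) :
    IsUnit (Matrix.of (fun (k ℓ : Fin n) => x ℓ ^ (k : ℕ))).det ∧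
    ∀ k ℓ : Fin n,
      (Matrix.of (fun (k ℓ : Fin n) => x ℓ ^ (k : ℕ)))⁻¹ k ℓ
        = (-1 : ℂ) ^ (n - 1 - (ℓ : ℕ)) *
            Multiset.esymm ((Finset.univ.erase k).val.map x) (n - 1 - (ℓ : ℕ)) /
          ∏ m ∈ Finset.univ.erase k, (x k - x m) := by
  set V : Matrix (Fin n) (Fin n) ℂ := Matrix.of (fun k ℓ => x ℓ ^ (k : ℕ)) with hV
  set B : Matrix (Fin n) (Fin n) ℂ := Matrix.of (fun k ℓ =>
      (-1 : ℂ) ^ (n - 1 - (ℓ : ℕ)) *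
        Multiset.esymm ((Finset.univ.erase k).val.map x) (n - 1 - (ℓ : ℕ)) /
      ∏ m ∈ Finset.univ.erase k, (x k - x m)) with hB
  have hcard : ∀ k : Fin n, Multiset.card (((Finset.univ.erase k).val.map x)) = n - 1 := by
    intro k
    simp [Finset.card_erase_of_mem]
  have hD : ∀ k : Fin n, (∏ m ∈ Finset.univ.erase k, (x k - x m)) ≠ 0 := by
    intro k
    refine Finset.prod_ne_zero_iff.mpr fun m hm => ?_
    have : m ≠ k := Finset.ne_of_mem_erase hm
    exact sub_ne_zero.mpr fun h => this (hx h.symm)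
  have hBV : B * V = 1 := by
    ext k ℓ
    set Q : ℂ[X] := (((Finset.univ.erase k).val.map x).map fun t => X - C t).prod with hQ
    have hdeg : Q.natDegree = n - 1 := by
      rw [hQ, Polynomial.natDegree_multiset_prod_X_sub_C_eq_card, hcard]
    have hcoeff : ∀ m : Fin n, Q.coeff (m : ℕ) =
        (-1 : ℂ) ^ (n - 1 - (m : ℕ)) *
          Multiset.esymm ((Finset.univ.erase k).val.map x) (n - 1 - (m : ℕ)) := by
      intro m
      rw [hQ, Multiset.prod_X_sub_C_coeff _ (by rw [hcard]; omega), hcard]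
    have heval : ∀ y : ℂ, Q.eval y = ∏ m ∈ Finset.univ.erase k, (y - x m) := by
      intro y
      rw [hQ, Polynomial.eval_multiset_prod, Multiset.map_map, Multiset.map_map,
        Finset.prod_eq_multiset_prod]
      exact congrArg Multiset.prod (Multiset.map_congr rfl fun a _ => by simp)
    have hn : 0 < n := k.pos
    have hsum : (B * V) k ℓ = Q.eval (x ℓ) / (∏ m ∈ Finset.univ.erase k, (x k - x m)) := by
      rw [Polynomial.eval_eq_sum_range' (n := n) (by omega),
        Matrix.mul_apply]
      rw [Finset.sum_div, ← Fin.sum_univ_eq_sum_range]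
      refine Finset.sum_congr rfl fun m _ => ?_
      rw [hcoeff m]
      simp [hB, hV, div_mul_eq_mul_div]
    rw [hsum]
    by_cases hkl : k = ℓ
    · subst hkl
      rw [heval, div_self (hD k), Matrix.one_apply_eq]
    · rw [heval, Finset.prod_eq_zero (Finset.mem_erase.mpr ⟨fun h => hkl h.symm, Finset.mem_univ ℓ⟩) (sub_self (x ℓ)),
        zero_div, Matrix.one_apply_ne hkl]
  refine ⟨Matrix.isUnit_det_of_left_inverse hBV, fun k ℓ => ?_⟩
  rw [Matrix.inv_eq_left_inv hBV]
  rfl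
end

section
/- Let 𝒮 be a nonempty finite set of pairs (c,d) of nonnegative integers with c ≤ A and d ≤ B, and a_{c,d} nonzero complex numbers for (c,d) ∈ 𝒮. With α_c(z) = z^c + O(z^{A+1}) and β_d(z) = z^d + O(z^{B+1}) as above, write F(z,τ) := Σ_{(c,d)∈𝒮} a_{c,d} β_d(z) α_c(zτ) = Σ_j P_j(τ) z^j. Then min_j (j − deg(τ^j P_j(1/τ))) = min_{(c,d)∈𝒮} c and min_j (j − deg P_j(τ)) = min_{(c,d)∈𝒮} d. -/
open Finset Polynomial

theorem order_of_combination (M N : ℕ) (hM : 3 ≤ M) (hN : 3 ≤ N)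
    (a b : ℕ → ℕ → ℂ)
    (ha : ∀ c ≤ M - 3, ∀ j ≤ M - 3, a c j = if j = c then 1 else 0)
    (hb : ∀ d ≤ N - 3, ∀ j ≤ N - 3, b d j = if j = d then 1 else 0)
    (𝒮 : Finset (ℕ × ℕ)) (h𝒮 : 𝒮.Nonempty)
    (h𝒮sub : 𝒮 ⊆ (Finset.range (M - 2)) ×ˢ (Finset.range (N - 2)))
    (w : ℕ → ℕ → ℂ) (hw : ∀ p ∈ 𝒮, w p.1 p.2 ≠ 0)
    (P : ℕ → Polynomial ℂ)
    (hP : ∀ j, P j = ∑ p ∈ 𝒮, w p.1 p.2 •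
      (∑ n ∈ Finset.range (j + 1),
        Polynomial.C (a p.1 n * b p.2 (j - n)) * Polynomial.X ^ n)) :
    -- first component of the order: `min_j (j - deg(τ^j P_j(1/τ)))`, i.e. the minimal
    -- trailing degree, equals `min_{(c,d) ∈ 𝒮} c`
    ((∀ j n, (P j).coeff n ≠ 0 → 𝒮.inf' h𝒮 Prod.fst ≤ n) ∧
      (∃ j, (P j).coeff (𝒮.inf' h𝒮 Prod.fst) ≠ 0)) ∧
    -- second component: `min_j (j - deg P_j)` equals `min_{(c,d) ∈ 𝒮} d`
    ((∀ j n, (P j).coeff n ≠ 0 → n + 𝒮.inf' h𝒮 Prod.snd ≤ j) ∧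
      (∃ j n, (P j).coeff n ≠ 0 ∧ j = n + 𝒮.inf' h𝒮 Prod.snd)) := by
  have hfst : ∀ p ∈ 𝒮, p.1 ≤ M - 3 := by
    intro p hp
    have := h𝒮sub hp
    simp only [Finset.mem_product, Finset.mem_range] at this
    omega
  have hsnd : ∀ p ∈ 𝒮, p.2 ≤ N - 3 := by
    intro p hp
    have := h𝒮sub hp
    simp only [Finset.mem_product, Finset.mem_range] at this
    omega
  have hcoeff : ∀ j n, (P j).coeff n =
      if n ≤ j then ∑ p ∈ 𝒮, w p.1 p.2 * (a p.1 n * b p.2 (j - n)) else 0 := by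
    intro j n
    rw [hP]
    rw [Polynomial.finset_sum_coeff]
    simp only [Polynomial.coeff_smul, Polynomial.finset_sum_coeff, coeff_C_mul,
      coeff_X_pow, smul_eq_mul, mul_ite, mul_one, mul_zero]
    rcases le_or_gt n j with h | h
    · rw [if_pos h]
      refine Finset.sum_congr rfl fun p _ => ?_
      rw [Finset.sum_ite_eq (Finset.range (j + 1)) n
        (fun m => a p.1 m * b p.2 (j - m)), if_pos (by simpa using Nat.lt_succ_of_le h)]
    · rw [if_neg (by omega)]
      refine Finset.sum_eq_zero fun p _ => ?_
      rw [Finset.sum_ite_eq (Finset.range (j + 1)) n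
        (fun m => a p.1 m * b p.2 (j - m)), if_neg (by simp; omega), mul_zero]
  have key : ∀ p ∈ 𝒮, (P (p.1 + p.2)).coeff p.1 = w p.1 p.2 := by
    intro p hp
    rw [hcoeff, if_pos (Nat.le_add_right _ _), Finset.sum_eq_single p]
    · rw [ha p.1 (hfst p hp) p.1 (hfst p hp), if_pos rfl,
        Nat.add_sub_cancel_left, hb p.2 (hsnd p hp) p.2 (hsnd p hp), if_pos rfl]
      ring
    · intro q hq hne
      rcases eq_or_ne q.1 p.1 with h1 | h1
      · have h2 : q.2 ≠ p.2 := fun h2 => hne (Prod.ext h1 h2)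
        rw [Nat.add_sub_cancel_left, hb q.2 (hsnd q hq) p.2 (hsnd p hp),
          if_neg (Ne.symm h2), mul_zero, mul_zero]
      · rw [ha q.1 (hfst q hq) p.1 (hfst p hp), if_neg (Ne.symm h1), zero_mul, mul_zero]
    · intro h; exact absurd hp h
  refine ⟨⟨?_, ?_⟩, ?_, ?_⟩
  · intro j n hne
    by_contra hlt
    push_neg at hlt
    apply hne
    rw [hcoeff]
    split_ifs with h
    · refine Finset.sum_eq_zero fun p hp => ?_
      have h1 : 𝒮.inf' h𝒮 Prod.fst ≤ p.1 := Finset.inf'_le _ hp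
      have h2 := hfst p hp
      rw [ha p.1 h2 n (by omega), if_neg (by omega), zero_mul, mul_zero]
    · rfl
  · obtain ⟨p, hp, hpe⟩ := Finset.exists_mem_eq_inf' h𝒮 Prod.fst
    exact ⟨p.1 + p.2, by rw [hpe, key p hp]; exact hw p hp⟩
  · intro j n hne
    by_contra hlt
    push_neg at hlt
    apply hne
    rw [hcoeff]
    split_ifs with h
    · refine Finset.sum_eq_zero fun p hp => ?_
      have h1 : 𝒮.inf' h𝒮 Prod.snd ≤ p.2 := Finset.inf'_le _ hp
      have h2 := hsnd p hp
      rw [hb p.2 h2 (j - n) (by omega), if_neg (by omega), mul_zero, mul_zero]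
    · rfl
  · obtain ⟨p, hp, hpe⟩ := Finset.exists_mem_eq_inf' h𝒮 Prod.snd
    refine ⟨p.1 + p.2, p.1, ?_, by rw [hpe]⟩
    rw [key p hp]; exact hw p hp
end

section
/- Let N ≥ 3 and let ω(z) = Σ_{j=1}^{N-1} β(j) e(z)/(e(j/N) − e(z)) with Σ_{j=1}^{N-1} β(j) = 0 (so ω is holomorphic at 0), where e(z)=e^{2πiz}. Then the order of vanishing of ω at z = 0 equals the largest m ≥ 0 such that Σ_{j=1}^{N-1} β(j) cot^r(πj/N) = 0 for all 0 ≤ r ≤ m (with order ∞ if ω = 0). -/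
/-!
Write `ω(z) = Σ_j β(j) h_j(z)` with `h_j(z) = 1 / (e(j/N - z) - 1)`. Each `h_j` solves the Riccati
equation `h' = 2πi (h² + h)`, so `ω⁽ᵏ⁾ = Σ_j β(j) P_k(h_j)` for polynomials `P_k` of degree `k + 1`.
At `z = 0`, `h_j(0) = -(i/2) cot(πj/N) - 1/2`, hence `ω⁽ᵏ⁾(0) = Σ_{r ≤ k+1} c_{k,r} S_r` with
`S_r = Σ_j β(j) cot^r(πj/N)` and `c_{k,k+1} ≠ 0`. Since `S_0 = Σ_j β(j) = 0`, this triangular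
system shows that `ω⁽ᵏ⁾(0) = 0` for all `k < m` iff `S_r = 0` for all `r ≤ m`.
-/

open Finset Complex

/-- The weak function `ω(z) = Σ_{j=1}^{N-1} β(j) e(z)/(e(j/N) − e(z))`, `e(z) = e^{2πiz}`. -/
noncomputable def weakFun (N : ℕ) (β : ℕ → ℂ) (z : ℂ) : ℂ :=
  ∑ j ∈ Finset.Ico 1 N,
    β j * (Complex.exp (2 * Real.pi * Complex.I * z) /
      (Complex.exp (2 * Real.pi * Complex.I * j / N) - Complex.exp (2 * Real.pi * Complex.I * z)))

open Polynomial Filter Topology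
open scoped Real

namespace Polynomial

/-- If `f' = q(f)`, then `f⁽ᵏ⁾ = (iterDerivPoly q k)(f)`. -/
noncomputable def iterDerivPoly {R : Type*} [CommSemiring R] (q : R[X]) : ℕ → R[X]
  | 0 => X
  | k + 1 => q * derivative (iterDerivPoly q k)

variable {R : Type*} [CommSemiring R] [Nontrivial R] [NoZeroDivisors R] [IsAddTorsionFree R]
  {q : R[X]}

theorem natDegree_iterDerivPoly (hq : q.natDegree = 2) (k : ℕ) :
    (iterDerivPoly q k).natDegree = k + 1 := by
  induction k with
  | zero => simp [iterDerivPoly]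
  | succ k ih =>
    have hq0 : q ≠ 0 := by rintro rfl; simp at hq
    have hd : derivative (iterDerivPoly q k) ≠ 0 := by simp [ih]
    rw [iterDerivPoly, natDegree_mul hq0 hd, natDegree_derivative, ih, hq]
    omega

end Polynomial

section IteratedDeriv

variable {𝕜 F : Type*} [NontriviallyNormedField 𝕜] [NormedAddCommGroup F] [NormedSpace 𝕜 F]

theorem iteratedDeriv_eventuallyEq_of_hasDerivAt {f : 𝕜 → F} {g : ℕ → 𝕜 → F} {x : 𝕜}
    (h0 : f =ᶠ[𝓝 x] g 0) (hg : ∀ᶠ z in 𝓝 x, ∀ k, HasDerivAt (g k) (g (k + 1) z) z) (k : ℕ) :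
    iteratedDeriv k f =ᶠ[𝓝 x] g k := by
  induction k with
  | zero => simpa using h0
  | succ k ih =>
    filter_upwards [ih.eventuallyEq_nhds, hg] with z hz hgz
    rw [iteratedDeriv_succ, hz.deriv_eq, (hgz k).deriv]

theorem hasDerivAt_eval_comp_of_hasDerivAt {q : 𝕜[X]} {g : 𝕜 → 𝕜} {z : 𝕜}
    (hg : HasDerivAt g (q.eval (g z)) z) (p : 𝕜[X]) :
    HasDerivAt (fun w => p.eval (g w)) ((q * derivative p).eval (g z)) z := by
  rw [eval_mul, mul_comm]
  exact (p.hasDerivAt (g z)).comp z hg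

theorem iteratedDeriv_sum_eventuallyEq_iterDerivPoly {ι : Type*} {f : ι → 𝕜 → 𝕜} {q : 𝕜[X]}
    {x : 𝕜} (s : Finset ι) (β : ι → 𝕜)
    (hf : ∀ᶠ z in 𝓝 x, ∀ j ∈ s, HasDerivAt (f j) (q.eval (f j z)) z) (k : ℕ) :
    iteratedDeriv k (fun z => ∑ j ∈ s, β j * f j z) =ᶠ[𝓝 x]
      fun z => ∑ j ∈ s, β j * (iterDerivPoly q k).eval (f j z) := by
  refine iteratedDeriv_eventuallyEq_of_hasDerivAt
    (g := fun k z => ∑ j ∈ s, β j * (iterDerivPoly q k).eval (f j z))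
    (.of_forall fun z => by simp [iterDerivPoly]) ?_ k
  filter_upwards [hf] with z hz k
  exact HasDerivAt.fun_sum fun j hj =>
    (hasDerivAt_eval_comp_of_hasDerivAt (hz j hj) _).const_mul (β j)

end IteratedDeriv

noncomputable def expKernel (a z : ℂ) : ℂ := (exp (2 * π * I * (a - z)) - 1)⁻¹

noncomputable def kernelPoly : ℂ[X] := C (2 * π * I) * (X ^ 2 + X)

theorem natDegree_kernelPoly : kernelPoly.natDegree = 2 := by
  have := two_pi_I_ne_zero
  unfold kernelPoly
  compute_degree!

theorem hasDerivAt_expKernel {a z : ℂ} (h : exp (2 * π * I * (a - z)) ≠ 1) :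
    HasDerivAt (expKernel a) (kernelPoly.eval (expKernel a z)) z := by
  have hexp : HasDerivAt (fun w => exp (2 * π * I * (a - w)) - 1)
      (exp (2 * π * I * (a - z)) * -(2 * π * I)) z := by
    simpa using (((hasDerivAt_id z).const_sub a).const_mul (2 * π * I)).cexp.sub_const 1
  refine (hexp.inv (sub_ne_zero.2 h)).congr_deriv ?_
  simp only [kernelPoly, expKernel, eval_mul, eval_C, eval_add, eval_pow, eval_X]
  field_simp
  ring

theorem expKernel_eq_cot {a z : ℂ} (h : exp (2 * π * I * (a - z)) ≠ 1) :
    expKernel a z = -I / 2 * cot (π * (a - z)) - 1 / 2 := by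
  rw [expKernel, cot_pi_eq_exp_ratio]
  field_simp
  ring

-- No hypothesis is needed: at a pole both sides are the junk value `0`.
theorem weakFun_eq_sum_expKernel (N : ℕ) (β : ℕ → ℂ) :
    weakFun N β = fun z => ∑ j ∈ Ico 1 N, β j * expKernel (j / N) z := by
  funext z
  refine sum_congr rfl fun j _ => ?_
  rw [expKernel, mul_sub, exp_sub, div_sub_one (exp_ne_zero _), inv_div, mul_div_assoc]

theorem exp_two_pi_I_mul_div_ne_one {j N : ℕ} (hj : j ∈ Ico 1 N) :
    exp (2 * π * I * (j / N)) ≠ 1 := by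
  obtain ⟨hj1, hjN⟩ := mem_Ico.1 hj
  have hζ := isPrimitiveRoot_exp N (by omega)
  rw [show 2 * π * I * (j / N) = j * (2 * π * I / N) by ring, exp_nat_mul]
  exact hζ.pow_ne_one_of_pos_of_lt (by omega) hjN

/-- `cotPoly k` expresses `ω⁽ᵏ⁾(0)` through the cotangent sums, via
`1 / (e(a) - 1) = -(i/2) cot(πa) - 1/2`. -/
noncomputable def cotPoly (k : ℕ) : ℂ[X] :=
  (iterDerivPoly kernelPoly k).comp (C (-I / 2) * X + C (-1 / 2))

theorem natDegree_cotPoly (k : ℕ) : (cotPoly k).natDegree = k + 1 := by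
  rw [cotPoly, natDegree_comp, natDegree_iterDerivPoly natDegree_kernelPoly,
    natDegree_linear (by simp [I_ne_zero]), mul_one]

theorem coeff_cotPoly_ne_zero (k : ℕ) : (cotPoly k).coeff (k + 1) ≠ 0 := by
  rw [← natDegree_cotPoly k, coeff_natDegree, leadingCoeff_ne_zero]
  exact ne_zero_of_natDegree_gt (n := 0) (by rw [natDegree_cotPoly]; omega)

theorem expKernel_div_zero {j N : ℕ} (hj : j ∈ Ico 1 N) :
    expKernel (j / N) 0 = (C (-I / 2) * X + C (-1 / 2)).eval (Real.cot (π * j / N) : ℂ) := by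
  rw [expKernel_eq_cot (by simpa using exp_two_pi_I_mul_div_ne_one hj), ofReal_cot]
  simp only [eval_add, eval_mul, eval_C, eval_X]
  push_cast
  ring_nf

theorem iteratedDeriv_weakFun_zero (N : ℕ) (β : ℕ → ℂ) (k : ℕ) :
    iteratedDeriv k (weakFun N β) 0 = ∑ r ∈ range (k + 2),
      (cotPoly k).coeff r * ∑ j ∈ Ico 1 N, β j * (Real.cot (π * j / N) : ℂ) ^ r := by
  have hderiv : ∀ᶠ z in 𝓝 0, ∀ j ∈ Ico 1 N,
      HasDerivAt (expKernel (j / N)) (kernelPoly.eval (expKernel (j / N) z)) z := by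
    have hne : ∀ᶠ z in 𝓝 (0 : ℂ), ∀ j ∈ Ico 1 N, exp (2 * π * I * (j / N - z)) ≠ 1 :=
      (eventually_all_finset _).2 fun j hj => ContinuousAt.eventually_ne (by fun_prop)
        (by simpa using exp_two_pi_I_mul_div_ne_one hj)
    filter_upwards [hne] with z hz j hj
    exact hasDerivAt_expKernel (hz j hj)
  rw [weakFun_eq_sum_expKernel, (iteratedDeriv_sum_eventuallyEq_iterDerivPoly _ β hderiv k).self_of_nhds]
  simp_rw [mul_sum]
  rw [sum_comm]
  refine sum_congr rfl fun j hj => ?_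
  rw [expKernel_div_zero hj, ← eval_comp, ← cotPoly,
    eval_eq_sum_range' (n := k + 2) (by rw [natDegree_cotPoly]; omega), mul_sum]
  exact sum_congr rfl fun r _ => by ring

theorem forall_eq_zero_iff_of_triangular {R : Type*} [Semiring R] [NoZeroDivisors R]
    {D S : ℕ → R} (a : ℕ → ℕ → R) (hD : ∀ k, D k = ∑ r ∈ range (k + 2), a k r * S r)
    (ha : ∀ k, a k (k + 1) ≠ 0) (hS : S 0 = 0) (m : ℕ) :
    (∀ k < m, D k = 0) ↔ ∀ r ≤ m, S r = 0 := by
  induction m with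
  | zero => simp [hS]
  | succ m ih =>
    have hstep : (∀ r ≤ m, S r = 0) → (D m = 0 ↔ S (m + 1) = 0) := fun hlow => by
      rw [hD, sum_range_succ, sum_eq_zero fun r hr => by
        rw [hlow r (Nat.lt_succ_iff.1 (mem_range.1 hr)), mul_zero], zero_add,
        mul_eq_zero, or_iff_right (ha m)]
    rw [Nat.forall_lt_succ_right, ih]
    constructor
    · rintro ⟨hlow, hm⟩ r hr
      rcases Nat.le_succ_iff.1 hr with hr | rfl
      exacts [hlow r hr, (hstep hlow).1 hm]
    · intro h
      have hlow : ∀ r ≤ m, S r = 0 := fun r hr => h r (Nat.le_succ_of_le hr)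
      exact ⟨hlow, (hstep hlow).2 (h (m + 1) le_rfl)⟩

/-- The order of vanishing is encoded by: `ω` vanishes to order at least `m` at `0` iff the
cotangent sums vanish for all `r ≤ m`. -/
theorem order_eq_cotangent_kernel_general (N : ℕ) (β : ℕ → ℂ)
    (hsum : ∑ j ∈ Finset.Ico 1 N, β j = 0) :
    ∀ m : ℕ,
      (∀ k, k < m → iteratedDeriv k (weakFun N β) 0 = 0) ↔
      (∀ r, r ≤ m →
        ∑ j ∈ Finset.Ico 1 N, β j * (Real.cot (Real.pi * j / N) : ℂ) ^ r = 0) :=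
  forall_eq_zero_iff_of_triangular (fun k r => (cotPoly k).coeff r)
    (iteratedDeriv_weakFun_zero N β) coeff_cotPoly_ne_zero (by simpa using hsum)

/-- The order of vanishing of `ω` at `0` equals the largest `m` such that all the cotangent
sums `Σ_j β(j) cot^r(πj/N)` vanish for `0 ≤ r ≤ m`; stated equivalently:
for every `m`, the first `m` Taylor coefficients of `ω` at `0` vanish iff
the cotangent sums vanish for all `r ≤ m`. -/
theorem order_eq_cotangent_kernel (N : ℕ) (hN : 3 ≤ N) (β : ℕ → ℂ)
    (hsum : ∑ j ∈ Finset.Ico 1 N, β j = 0) :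
    ∀ m : ℕ,
      (∀ k, k < m → iteratedDeriv k (weakFun N β) 0 = 0) ↔
      (∀ r, r ≤ m →
        ∑ j ∈ Finset.Ico 1 N, β j * (Real.cot (Real.pi * j / N) : ℂ) ^ r = 0) :=
  order_eq_cotangent_kernel_general N β hsum
end
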